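/- The series whose terms are 1/( (a·c + b·d)·( a·(a+c) + b·(b+d) )·( (a+c)·c + (b+d)·d ) ), summed over all quadruples (a,b,c,d) of nonnegative integers with a ≥ b, c ≥ d and a·d − b·c = 1, converges and its sum equals 1 − π/4. -/

import Mathlib

/-- Quadruples `(a,b,c,d)` of integers with `a ≥ b ≥ 0`, `c ≥ d ≥ 0` and `a·d − b·c = 1`. -/
def T : Set (ℤ × ℤ × ℤ × ℤ) :=
  {p | p.2.1 ≤ p.1 ∧ 0 ≤ p.2.1 ∧ p.2.2.2 ≤ p.2.2.1 ∧ 0 ≤ p.2.2.2 ∧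
    p.1 * p.2.2.2 - p.2.1 * p.2.2.1 = 1}

/-!
The set `T` is the Stern–Brocot tree of `[0, 1]`: writing `v = (a, b)` and `w = (c, d)`, every
element arises in exactly one way from the root `(1, 0, 1, 1)` by repeatedly replacing `(v, w)` by
`(v, v + w)` or `(v + w, w)`. Put `u = a * c + b * d`. Lagrange's identity
`|v|² |w|² = u² + (a * d - b * c)² = u² + 1` shows that the term at `(v, w)` equals
`1 / u - 1 / u' - 1 / u''`, where `u'` and `u''` belong to the two children, so the sum over the
first `n` levels telescopes to `1` minus the sum of `1 / u` over level `n`. Now `1 / u` is the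
tangent of the angle between `v` and `w`, and these angles add up to `π / 4` on every level; since
`1 / u ≤ 1 / (n + 1)` at depth `n`, the sum of `1 / u` over level `n` tends to `π / 4`.
-/

open Real Filter Topology

theorem Real.arctan_le_self {x : ℝ} (hx : 0 ≤ x) : arctan x ≤ x := by
  have hmono : Monotone fun t => t - arctan t :=
    monotone_of_hasDerivAt_nonneg (fun t => (hasDerivAt_id t).sub (hasDerivAt_arctan t))
      fun t => by
        simp only [Pi.zero_apply, sub_nonneg]
        exact div_le_one_of_le₀ (by nlinarith [sq_nonneg t]) (by positivity)
  simpa using hmono hx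

theorem Real.self_sub_pow_three_div_three_le_arctan {x : ℝ} (hx : 0 ≤ x) :
    x - x ^ 3 / 3 ≤ arctan x := by
  have hderiv (t : ℝ) :
      HasDerivAt (fun t => arctan t - (t - t ^ 3 / 3)) (t ^ 4 / (1 + t ^ 2)) t := by
    refine ((hasDerivAt_arctan t).sub ((hasDerivAt_id' t).sub
      ((hasDerivAt_pow 3 t).div_const 3))).congr_deriv ?_
    field_simp
    ring
  have hmono := monotone_of_hasDerivAt_nonneg hderiv fun t => by positivity
  simpa using hmono hx

section Identities

variable {u p q : ℝ}

theorem one_div_sub_one_div_add_sub_one_div_add (hu : 0 < u) (hp : 0 ≤ p) (hq : 0 ≤ q)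
    (hpq : p * q = u ^ 2 + 1) :
    1 / u - 1 / (u + p) - 1 / (u + q) = 1 / u * (1 / (u + p)) * (1 / (u + q)) := by
  have : u + p ≠ 0 := by positivity
  have : u + q ≠ 0 := by positivity
  field_simp
  linear_combination hpq

theorem arctan_one_div_add_add_arctan_one_div_add (hu : 0 < u) (hp : 0 ≤ p) (hq : 0 ≤ q)
    (hpq : p * q = u ^ 2 + 1) :
    arctan (1 / (u + p)) + arctan (1 / (u + q)) = arctan (1 / u) := by
  have hprod : 1 < (u + p) * (u + q) := by nlinarith
  rw [arctan_add (by rw [one_div_mul_one_div]; exact (div_lt_one (by linarith)).mpr hprod)]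
  congr 1
  have : u + p ≠ 0 := by positivity
  have : u + q ≠ 0 := by positivity
  have : (u + p) * (u + q) - 1 ≠ 0 := by linarith
  field_simp
  linear_combination -hpq

end Identities

section BinaryTree

variable {M : Type*} [AddCommMonoid M]

def levelSum (F : List Bool → M) (n : ℕ) : M := ∑ w : Fin n → Bool, F (List.ofFn w)

@[simp]
theorem levelSum_zero (F : List Bool → M) : levelSum F 0 = F [] := by
  simp [levelSum]

theorem levelSum_succ (F : List Bool → M) (n : ℕ) :
    levelSum F (n + 1) = levelSum (fun l => F (false :: l) + F (true :: l)) n := by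
  rw [levelSum, ← (Fin.consEquiv fun _ => Bool).sum_comp, Fintype.sum_prod_type, Fintype.sum_bool,
    levelSum, ← Finset.sum_add_distrib]
  simp [List.ofFn_succ, add_comm]

theorem levelSum_eq_of_forall_eq_add {F : List Bool → M}
    (hF : ∀ l, F l = F (false :: l) + F (true :: l)) (n : ℕ) : levelSum F n = F [] := by
  induction n with
  | zero => exact levelSum_zero F
  | succ n ih => rw [levelSum_succ, ← ih]; simp only [levelSum, ← hF]

end BinaryTree

section TreeTelescoping

variable {f F : List Bool → ℝ}

theorem levelSum_nonneg (hF : ∀ l, 0 ≤ F l) (n : ℕ) : 0 ≤ levelSum F n :=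
  Finset.sum_nonneg fun _ _ => hF _

theorem levelSum_sub_levelSum_succ (hf : ∀ l, f l = F l - F (false :: l) - F (true :: l))
    (n : ℕ) : levelSum F n - levelSum F (n + 1) = levelSum f n := by
  rw [levelSum_succ]
  simp only [levelSum, ← Finset.sum_sub_distrib, hf, sub_sub]

theorem antitone_levelSum (hf : ∀ l, f l = F l - F (false :: l) - F (true :: l))
    (hf₀ : ∀ l, 0 ≤ f l) : Antitone (levelSum F) :=
  antitone_nat_of_succ_le fun n => sub_nonneg.mp <|
    levelSum_sub_levelSum_succ hf n ▸ levelSum_nonneg hf₀ n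

theorem hasSum_of_forall_eq_sub_sub (hf : ∀ l, f l = F l - F (false :: l) - F (true :: l))
    (hf₀ : ∀ l, 0 ≤ f l) {c : ℝ} (hF : Tendsto (levelSum F) atTop (𝓝 c)) :
    HasSum f (F [] - c) := by
  have hlevel : ∀ n, HasSum (fun w : Fin n → Bool => f (List.ofFn w)) (levelSum f n) :=
    fun n => hasSum_fintype _
  have hnat : HasSum (levelSum f) (F [] - c) := by
    rw [hasSum_iff_tendsto_nat_of_nonneg (levelSum_nonneg hf₀)]
    simp only [← levelSum_sub_levelSum_succ hf, Finset.sum_range_sub', levelSum_zero]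
    exact tendsto_const_nhds.sub hF
  have hsummable : Summable (f ∘ List.equivSigmaTuple.symm) :=
    (summable_sigma_of_nonneg fun _ => hf₀ _).mpr
      ⟨fun n => (hlevel n).summable, hnat.summable.congr fun n => (hlevel n).tsum_eq.symm⟩
  exact List.equivSigmaTuple.symm.hasSum_iff.mp (hnat.sigma_of_hasSum hlevel hsummable)

end TreeTelescoping

namespace SternBrocot

theorem mem_T {a b c d : ℤ} :
    (a, b, c, d) ∈ T ↔ b ≤ a ∧ 0 ≤ b ∧ d ≤ c ∧ 0 ≤ d ∧ a * d - b * c = 1 :=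
  Iff.rfl

theorem pos_of_mem_T {a b c d : ℤ} (h : (a, b, c, d) ∈ T) : 0 < a ∧ 0 < c := by
  obtain ⟨hba, hb, hdc, hd, hdet⟩ := mem_T.mp h
  constructor <;> nlinarith

def child : Bool → ℤ × ℤ × ℤ × ℤ → ℤ × ℤ × ℤ × ℤ
  | false, (a, b, c, d) => (a, b, a + c, b + d)
  | true, (a, b, c, d) => (a + c, b + d, c, d)

def node : List Bool → ℤ × ℤ × ℤ × ℤ
  | [] => (1, 0, 1, 1)
  | x :: l => child x (node l)

theorem child_mem_T (x : Bool) {p : ℤ × ℤ × ℤ × ℤ} (hp : p ∈ T) : child x p ∈ T := by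
  obtain ⟨a, b, c, d⟩ := p
  obtain ⟨hba, hb, hdc, hd, hdet⟩ := mem_T.mp hp
  cases x <;> refine mem_T.mpr ⟨?_, ?_, ?_, ?_, ?_⟩ <;> linarith

theorem node_mem_T : ∀ l, node l ∈ T
  | [] => mem_T.mpr (by norm_num)
  | x :: l => child_mem_T x (node_mem_T l)

theorem child_injective (x : Bool) : Function.Injective (child x) := by
  rintro ⟨a, b, c, d⟩ ⟨a', b', c', d'⟩ h
  cases x <;> simp only [child, Prod.mk.injEq] at h ⊢ <;> omega

def lastStep (p : ℤ × ℤ × ℤ × ℤ) : Option Bool :=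
  if p.1 < p.2.2.1 then some false else if p.2.2.1 < p.1 then some true else none

theorem lastStep_child (x : Bool) {p : ℤ × ℤ × ℤ × ℤ} (hp : p ∈ T) :
    lastStep (child x p) = some x := by
  obtain ⟨a, b, c, d⟩ := p
  obtain ⟨ha, hc⟩ := pos_of_mem_T hp
  cases x <;> simp [lastStep, child, ha, hc, ha.le.not_gt]

theorem lastStep_node : ∀ l, lastStep (node l) = l.head?
  | [] => rfl
  | x :: l => lastStep_child x (node_mem_T l)

theorem node_injective : Function.Injective node := by
  intro l₁
  induction l₁ with
  | nil =>
    intro l₂ h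
    have : l₂.head? = none := by rw [← lastStep_node, ← h]; rfl
    exact (List.head?_eq_none_iff.mp this).symm
  | cons x l₁ ih =>
    intro l₂ h
    have : l₂.head? = some x := by rw [← lastStep_node, ← h, lastStep_node]; rfl
    obtain ⟨l₂, rfl⟩ := List.head?_eq_some_iff.mp this
    rw [ih (child_injective x h)]

theorem eq_root_of_mem_T {a b d : ℤ} (h : (a, b, a, d) ∈ T) : (a, b, a, d) = node [] := by
  obtain ⟨hba, hb, hda, hd, hdet⟩ := mem_T.mp h
  have hdb : 0 < d - b := by nlinarith
  have ha : a = 1 := by nlinarith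
  subst ha
  simp only [node, Prod.mk.injEq, true_and]
  omega

theorem exists_node_eq (a b c d : ℤ) (hp : (a, b, c, d) ∈ T) :
    ∃ l, node l = (a, b, c, d) := by
  obtain ⟨ha, hc⟩ := pos_of_mem_T hp
  obtain ⟨hba, hb, hdc, hd, hdet⟩ := mem_T.mp hp
  rcases lt_trichotomy a c with hac | rfl | hca
  · have hparent : (a, b, c - a, d - b) ∈ T :=
      mem_T.mpr ⟨hba, hb, by nlinarith, by nlinarith, by linarith⟩
    obtain ⟨l, hl⟩ := exists_node_eq a b (c - a) (d - b) hparent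
    exact ⟨false :: l, by simp [node, hl, child]⟩
  · exact ⟨[], (eq_root_of_mem_T hp).symm⟩
  · have hparent : (a - c, b - d, c, d) ∈ T :=
      mem_T.mpr ⟨by nlinarith, by nlinarith, hdc, hd, by linarith⟩
    obtain ⟨l, hl⟩ := exists_node_eq (a - c) (b - d) c d hparent
    exact ⟨true :: l, by simp [node, hl, child]⟩
termination_by (a + c).toNat
decreasing_by all_goals omega

noncomputable def nodeEquiv : List Bool ≃ T :=
  Equiv.ofBijective (fun l => ⟨node l, node_mem_T l⟩)
    ⟨fun _ _ h => node_injective (congrArg Subtype.val h),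
      fun ⟨⟨a, b, c, d⟩, hp⟩ => (exists_node_eq a b c d hp).imp fun _ h => Subtype.ext h⟩

theorem nodeEquiv_apply (l : List Bool) : (nodeEquiv l : ℤ × ℤ × ℤ × ℤ) = node l :=
  rfl

def dot : ℤ × ℤ × ℤ × ℤ → ℤ
  | (a, b, c, d) => a * c + b * d

-- On `T` this is `(a * d - b * c) / (a * c + b * d)`, the tangent of the angle between `(a, b)`
-- and `(c, d)`.
noncomputable def tanAngle (p : ℤ × ℤ × ℤ × ℤ) : ℝ := 1 / dot p

noncomputable def seriesTerm (p : ℤ × ℤ × ℤ × ℤ) : ℝ :=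
  1 / (((p.1 : ℝ) * (p.2.2.1 : ℝ) + (p.2.1 : ℝ) * (p.2.2.2 : ℝ)) *
    ((p.1 : ℝ) * ((p.1 : ℝ) + (p.2.2.1 : ℝ)) +
      (p.2.1 : ℝ) * ((p.2.1 : ℝ) + (p.2.2.2 : ℝ))) *
    (((p.1 : ℝ) + (p.2.2.1 : ℝ)) * (p.2.2.1 : ℝ) +
      ((p.2.1 : ℝ) + (p.2.2.2 : ℝ)) * (p.2.2.2 : ℝ)))

theorem dot_child_false (a b c d : ℤ) :
    dot (child false (a, b, c, d)) = dot (a, b, c, d) + (a ^ 2 + b ^ 2) := by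
  simp only [dot, child]; ring

theorem dot_child_true (a b c d : ℤ) :
    dot (child true (a, b, c, d)) = dot (a, b, c, d) + (c ^ 2 + d ^ 2) := by
  simp only [dot, child]; ring

theorem one_le_dot_of_mem_T {a b c d : ℤ} (hp : (a, b, c, d) ∈ T) : 1 ≤ dot (a, b, c, d) := by
  obtain ⟨ha, hc⟩ := pos_of_mem_T hp
  obtain ⟨-, hb, -, hd, -⟩ := mem_T.mp hp
  simp only [dot]; nlinarith

theorem dot_lt_dot_child (x : Bool) {p : ℤ × ℤ × ℤ × ℤ} (hp : p ∈ T) :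
    dot p < dot (child x p) := by
  obtain ⟨a, b, c, d⟩ := p
  obtain ⟨ha, hc⟩ := pos_of_mem_T hp
  cases x
  · rw [dot_child_false]; nlinarith
  · rw [dot_child_true]; nlinarith

theorem length_add_one_le_dot_node : ∀ l : List Bool, (l.length : ℤ) + 1 ≤ dot (node l)
  | [] => by simp [node, dot]
  | x :: l => by
    have := dot_lt_dot_child x (node_mem_T l)
    have := length_add_one_le_dot_node l
    simp only [List.length_cons, node]
    omega

theorem sq_add_sq_mul_sq_add_sq {a b c d : ℤ} (hp : (a, b, c, d) ∈ T) :
    (a ^ 2 + b ^ 2) * (c ^ 2 + d ^ 2) = dot (a, b, c, d) ^ 2 + 1 := by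
  obtain ⟨-, -, -, -, hdet⟩ := mem_T.mp hp
  simp only [dot]
  linear_combination (a * d - b * c + 1) * hdet

theorem seriesTerm_eq_mul (p : ℤ × ℤ × ℤ × ℤ) :
    seriesTerm p = tanAngle p * tanAngle (child false p) * tanAngle (child true p) := by
  obtain ⟨a, b, c, d⟩ := p
  simp only [seriesTerm, tanAngle, dot, child]
  push_cast
  rw [one_div_mul_one_div, one_div_mul_one_div]

theorem tanAngle_nonneg {p : ℤ × ℤ × ℤ × ℤ} (hp : p ∈ T) : 0 ≤ tanAngle p := by
  obtain ⟨a, b, c, d⟩ := p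
  have : (1 : ℝ) ≤ dot (a, b, c, d) := by exact_mod_cast one_le_dot_of_mem_T hp
  simp only [tanAngle]; positivity

theorem seriesTerm_nonneg {p : ℤ × ℤ × ℤ × ℤ} (hp : p ∈ T) : 0 ≤ seriesTerm p := by
  rw [seriesTerm_eq_mul]
  exact mul_nonneg (mul_nonneg (tanAngle_nonneg hp) (tanAngle_nonneg (child_mem_T false hp)))
    (tanAngle_nonneg (child_mem_T true hp))

theorem seriesTerm_eq_sub {p : ℤ × ℤ × ℤ × ℤ} (hp : p ∈ T) :
    seriesTerm p = tanAngle p - tanAngle (child false p) - tanAngle (child true p) := by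
  obtain ⟨a, b, c, d⟩ := p
  have hu : (0 : ℝ) < dot (a, b, c, d) := by exact_mod_cast one_le_dot_of_mem_T hp
  have hpq : ((a : ℝ) ^ 2 + b ^ 2) * (c ^ 2 + d ^ 2) = (dot (a, b, c, d) : ℝ) ^ 2 + 1 := by
    exact_mod_cast sq_add_sq_mul_sq_add_sq hp
  rw [seriesTerm_eq_mul, tanAngle, tanAngle, tanAngle, dot_child_false, dot_child_true]
  push_cast
  rw [one_div_sub_one_div_add_sub_one_div_add hu (by positivity) (by positivity) hpq]

theorem arctan_tanAngle_eq_add {p : ℤ × ℤ × ℤ × ℤ} (hp : p ∈ T) :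
    arctan (tanAngle p) = arctan (tanAngle (child false p)) + arctan (tanAngle (child true p)) := by
  obtain ⟨a, b, c, d⟩ := p
  have hu : (0 : ℝ) < dot (a, b, c, d) := by exact_mod_cast one_le_dot_of_mem_T hp
  have hpq : ((a : ℝ) ^ 2 + b ^ 2) * (c ^ 2 + d ^ 2) = (dot (a, b, c, d) : ℝ) ^ 2 + 1 := by
    exact_mod_cast sq_add_sq_mul_sq_add_sq hp
  rw [tanAngle, tanAngle, tanAngle, dot_child_false, dot_child_true]
  push_cast
  rw [arctan_one_div_add_add_arctan_one_div_add hu (by positivity) (by positivity) hpq]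

theorem seriesTerm_node_eq_sub (l : List Bool) :
    seriesTerm (node l) = tanAngle (node l) - tanAngle (node (false :: l)) -
      tanAngle (node (true :: l)) :=
  seriesTerm_eq_sub (node_mem_T l)

theorem tanAngle_root : tanAngle (node []) = 1 := by
  norm_num [tanAngle, dot, node]

theorem tanAngle_node_le (l : List Bool) : tanAngle (node l) ≤ 1 / (l.length + 1) := by
  have : ((l.length : ℤ) : ℝ) + 1 ≤ dot (node l) := by
    exact_mod_cast length_add_one_le_dot_node l
  exact one_div_le_one_div_of_le (by positivity) (by simpa using this)

theorem levelSum_arctan_tanAngle_node (n : ℕ) :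
    levelSum (fun l => arctan (tanAngle (node l))) n = π / 4 := by
  rw [levelSum_eq_of_forall_eq_add (F := fun l => arctan (tanAngle (node l)))
    fun l => arctan_tanAngle_eq_add (node_mem_T l), tanAngle_root, arctan_one]

theorem tanAngle_node_sub_arctan_le (l : List Bool) :
    tanAngle (node l) - arctan (tanAngle (node l)) ≤ tanAngle (node l) / (l.length + 1) ^ 2 := by
  set x := tanAngle (node l)
  have hx₀ : 0 ≤ x := tanAngle_nonneg (node_mem_T l)
  have hx : x ≤ 1 / (l.length + 1) := tanAngle_node_le l
  have hcube : x ^ 3 ≤ x / (l.length + 1) ^ 2 :=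
    calc x ^ 3 = x * x ^ 2 := by ring
      _ ≤ x * (1 / (l.length + 1)) ^ 2 := by gcongr
      _ = x / (l.length + 1) ^ 2 := by rw [div_pow, one_pow, mul_one_div]
  linarith [self_sub_pow_three_div_three_le_arctan hx₀, pow_nonneg hx₀ 3]

theorem levelSum_tanAngle_node_sub_pi_div_four (n : ℕ) :
    levelSum (fun l => tanAngle (node l)) n - π / 4 =
      levelSum (fun l => tanAngle (node l) - arctan (tanAngle (node l))) n := by
  rw [← levelSum_arctan_tanAngle_node n]
  simp only [levelSum, Finset.sum_sub_distrib]

theorem levelSum_tanAngle_node_le_one (n : ℕ) : levelSum (fun l => tanAngle (node l)) n ≤ 1 :=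
  (antitone_levelSum seriesTerm_node_eq_sub (fun l => seriesTerm_nonneg (node_mem_T l))
    (Nat.zero_le n)).trans_eq (by rw [levelSum_zero, tanAngle_root])

theorem tendsto_levelSum_tanAngle_node :
    Tendsto (levelSum fun l => tanAngle (node l)) atTop (𝓝 (π / 4)) := by
  have hlower (n : ℕ) : π / 4 ≤ levelSum (fun l => tanAngle (node l)) n :=
    sub_nonneg.mp <| levelSum_tanAngle_node_sub_pi_div_four n ▸ levelSum_nonneg
      (fun l => sub_nonneg.mpr (arctan_le_self (tanAngle_nonneg (node_mem_T l)))) n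
  have hupper (n : ℕ) :
      levelSum (fun l => tanAngle (node l)) n ≤ π / 4 + 1 / ((n : ℝ) + 1) ^ 2 := by
    have hexcess : levelSum (fun l => tanAngle (node l) - arctan (tanAngle (node l))) n ≤
        levelSum (fun l => tanAngle (node l)) n / ((n : ℝ) + 1) ^ 2 := by
      rw [levelSum, levelSum, Finset.sum_div]
      gcongr with w
      simpa using tanAngle_node_sub_arctan_le (List.ofFn w)
    have := div_le_div_of_nonneg_right (levelSum_tanAngle_node_le_one n)
      (by positivity : (0 : ℝ) ≤ ((n : ℝ) + 1) ^ 2)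
    linarith [levelSum_tanAngle_node_sub_pi_div_four n]
  refine tendsto_of_tendsto_of_tendsto_of_le_of_le tendsto_const_nhds ?_ hlower hupper
  simpa using (tendsto_const_nhds (x := π / 4)).add
    (tendsto_one_div_add_atTop_nhds_zero_nat.pow 2)

end SternBrocot

theorem stmt_14 :
    HasSum
      (fun p : T =>
        1 / (((p.val.1 : ℝ) * (p.val.2.2.1 : ℝ) + (p.val.2.1 : ℝ) * (p.val.2.2.2 : ℝ)) *
          ((p.val.1 : ℝ) * ((p.val.1 : ℝ) + (p.val.2.2.1 : ℝ)) +
            (p.val.2.1 : ℝ) * ((p.val.2.1 : ℝ) + (p.val.2.2.2 : ℝ))) *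
          (((p.val.1 : ℝ) + (p.val.2.2.1 : ℝ)) * (p.val.2.2.1 : ℝ) +
            ((p.val.2.1 : ℝ) + (p.val.2.2.2 : ℝ)) * (p.val.2.2.2 : ℝ))))
      (1 - Real.pi / 4) := by
  have h := hasSum_of_forall_eq_sub_sub SternBrocot.seriesTerm_node_eq_sub
    (fun l => SternBrocot.seriesTerm_nonneg (SternBrocot.node_mem_T l))
    SternBrocot.tendsto_levelSum_tanAngle_node
  rw [SternBrocot.tanAngle_root] at h
  refine SternBrocot.nodeEquiv.hasSum_iff.mp ?_
  simpa only [Function.comp_def, SternBrocot.nodeEquiv_apply, SternBrocot.seriesTerm] using h
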